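/- arXiv:2204.10666 — 2 statements merged into one kernel-verified Lean document; each statement's English description precedes it below -/
import Mathlib

section
/- For any graph G = (V,E) and any edge e ∈ E, γ_sp(G) satisfies (γ_sp(G−e) + γ_sp(G/e) − 1)/2 ≤ γ_sp(G) ≤ (γ_sp(G−e) + γ_sp(G/e))/2 + 1. -/
open SimpleGraph

/-- A super dominating set: a dominating set `S` such that every vertex `u ∉ S`
has a private "super" dominator `v ∈ S` with `N(v) ∩ (V \ S) = {u}`. -/
def IsSuperDominatingSet {V : Type*} (G : SimpleGraph V) (S : Finset V) : Prop :=
  (∀ u ∉ S, ∃ v ∈ S, G.Adj v u) ∧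
  (∀ u ∉ S, ∃ v ∈ S, ∀ w, (G.Adj v w ∧ w ∉ S) ↔ w = u)

/-- The super domination number: minimum size of a super dominating set. -/
noncomputable def superDominationNumber {V : Type*} (G : SimpleGraph V) : ℕ :=
  sInf {n | ∃ S : Finset V, IsSuperDominatingSet G S ∧ S.card = n}

/-- Edge contraction of the edge `uv`: `v` is deleted and `u` plays the role of the merged
vertex, adjacent to all former neighbours of `u` or `v`. -/
def contractEdge {V : Type*} (G : SimpleGraph V) (u v : V) : SimpleGraph {x : V // x ≠ v} :=
  SimpleGraph.fromRel (fun a b => G.Adj a.val b.val ∨ (a.val = u ∧ G.Adj v b.val))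

/-- Vertex deletion. -/
def deleteVertex {V : Type*} (G : SimpleGraph V) (v : V) : SimpleGraph {x : V // x ≠ v} :=
  G.induce {x : V | x ≠ v}

/-- Vertex contraction: delete `v` and make its open neighbourhood a clique. -/
def contractVertex {V : Type*} (G : SimpleGraph V) (v : V) : SimpleGraph {x : V // x ≠ v} :=
  SimpleGraph.fromRel (fun a b => G.Adj a.val b.val ∨ (G.Adj v a.val ∧ G.Adj v b.val))

section Aux

variable {V : Type*}

private lemma isSD_of_priv {G : SimpleGraph V} {S : Finset V}
    (h2 : ∀ u ∉ S, ∃ v ∈ S, ∀ w, (G.Adj v w ∧ w ∉ S) ↔ w = u) :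
    IsSuperDominatingSet G S := by
  refine ⟨fun u hu => ?_, h2⟩
  obtain ⟨v, hv, hw⟩ := h2 u hu
  exact ⟨v, hv, ((hw u).2 rfl).1⟩

private lemma sdn_le {G : SimpleGraph V} {S : Finset V} (hS : IsSuperDominatingSet G S) :
    superDominationNumber G ≤ S.card :=
  Nat.sInf_le ⟨S, hS, rfl⟩

private lemma sdn_spec [Fintype V] (G : SimpleGraph V) :
    ∃ S : Finset V, IsSuperDominatingSet G S ∧ S.card = superDominationNumber G := by
  have hne : {n | ∃ S : Finset V, IsSuperDominatingSet G S ∧ S.card = n}.Nonempty :=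
    ⟨Finset.univ.card, Finset.univ, ⟨fun u hu => absurd (Finset.mem_univ u) hu,
      fun u hu => absurd (Finset.mem_univ u) hu⟩, rfl⟩
  exact Nat.sInf_mem hne

/-- Characterization of adjacency in the contracted graph. -/
private lemma cadj_iff (G : SimpleGraph V) (u v : V) (a b : {x : V // x ≠ v}) :
    (contractEdge G u v).Adj a b ↔ a ≠ b ∧
      (G.Adj a.1 b.1 ∨ (a.1 = u ∧ G.Adj v b.1) ∨ (b.1 = u ∧ G.Adj v a.1)) := by
  rw [show contractEdge G u v = SimpleGraph.fromRel
        (fun a b => G.Adj a.val b.val ∨ (a.val = u ∧ G.Adj v b.val)) from rfl,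
      SimpleGraph.fromRel_adj]
  constructor
  · rintro ⟨hne, (h1 | h2) | (h3 | h4)⟩
    · exact ⟨hne, Or.inl h1⟩
    · exact ⟨hne, Or.inr (Or.inl h2)⟩
    · exact ⟨hne, Or.inl h3.symm⟩
    · exact ⟨hne, Or.inr (Or.inr h4)⟩
  · rintro ⟨hne, h1 | h2 | h3⟩
    · exact ⟨hne, Or.inl (Or.inl h1)⟩
    · exact ⟨hne, Or.inl (Or.inr h2)⟩
    · exact ⟨hne, Or.inr (Or.inr h3)⟩

/-- Transfer of a super dominating set between two graphs differing only on the pair `{u,v}`,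
in the case where `u ∉ S` : insert `u`. -/
private lemma transfer_insert {G H : SimpleGraph V} {u v : V}
    (hagree : ∀ a b, ¬(a = u ∧ b = v) → ¬(a = v ∧ b = u) → (G.Adj a b ↔ H.Adj a b))
    {S : Finset V} [DecidableEq V] (hS : IsSuperDominatingSet G S) (hu : u ∉ S) :
    IsSuperDominatingSet H (insert u S) := by
  refine isSD_of_priv ?_
  intro x hx
  have hxu : x ≠ u := fun e => hx (e ▸ Finset.mem_insert_self u S)
  have hxS : x ∉ S := fun e => hx (Finset.mem_insert_of_mem e)
  obtain ⟨w, hwS, hw⟩ := hS.2 x hxS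
  have hwu : w ≠ u := fun e => hu (e ▸ hwS)
  refine ⟨w, Finset.mem_insert_of_mem hwS, ?_⟩
  intro z
  constructor
  · rintro ⟨hz, hzS'⟩
    have hzu : z ≠ u := fun e => hzS' (e ▸ Finset.mem_insert_self u S)
    have hzS : z ∉ S := fun e => hzS' (Finset.mem_insert_of_mem e)
    exact (hw z).1 ⟨(hagree w z (fun p => hwu p.1) (fun p => hzu p.2)).2 hz, hzS⟩
  · rintro rfl
    obtain ⟨hadj, hxS'⟩ := (hw z).2 rfl
    exact ⟨(hagree w z (fun p => hwu p.1) (fun p => hxu p.2)).1 hadj, hx⟩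

/-- Transfer in the case where both `u, v ∈ S` : same set works. -/
private lemma transfer_mem {G H : SimpleGraph V} {u v : V}
    (hagree : ∀ a b, ¬(a = u ∧ b = v) → ¬(a = v ∧ b = u) → (G.Adj a b ↔ H.Adj a b))
    {S : Finset V} (hS : IsSuperDominatingSet G S) (hu : u ∈ S) (hv : v ∈ S) :
    IsSuperDominatingSet H S := by
  refine isSD_of_priv ?_
  intro x hx
  obtain ⟨w, hwS, hw⟩ := hS.2 x hx
  refine ⟨w, hwS, ?_⟩
  intro z
  constructor
  · rintro ⟨hz, hzS⟩
    exact (hw z).1 ⟨(hagree w z (fun p => hzS (p.2 ▸ hv)) (fun p => hzS (p.2 ▸ hu))).2 hz, hzS⟩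
  · rintro rfl
    obtain ⟨hadj, hxS2⟩ := (hw z).2 rfl
    exact ⟨(hagree w z (fun p => hxS2 (p.2 ▸ hv)) (fun p => hxS2 (p.2 ▸ hu))).1 hadj, hxS2⟩

private lemma transfer {G H : SimpleGraph V} {u v : V}
    (hagree : ∀ a b, ¬(a = u ∧ b = v) → ¬(a = v ∧ b = u) → (G.Adj a b ↔ H.Adj a b))
    {S : Finset V} (hS : IsSuperDominatingSet G S) :
    ∃ S' : Finset V, IsSuperDominatingSet H S' ∧ S'.card ≤ S.card + 1 := by
  classical
  by_cases hu : u ∈ S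
  · by_cases hv : v ∈ S
    · exact ⟨S, transfer_mem hagree hS hu hv, Nat.le_succ _⟩
    · exact ⟨insert v S,
        transfer_insert (fun a b p q => hagree a b q p) hS hv, Finset.card_insert_le _ _⟩
  · exact ⟨insert u S, transfer_insert hagree hS hu, Finset.card_insert_le _ _⟩

private lemma hagree_del (G : SimpleGraph V) (u v : V) :
    ∀ a b, ¬(a = u ∧ b = v) → ¬(a = v ∧ b = u) →
      (G.Adj a b ↔ (G.deleteEdges {s(u, v)}).Adj a b) := by
  intro a b h1 h2
  rw [SimpleGraph.deleteEdges_adj]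
  constructor
  · intro hadj
    refine ⟨hadj, fun hmem => ?_⟩
    rw [Set.mem_singleton_iff, Sym2.eq_iff] at hmem
    exact hmem.elim h1 h2
  · exact fun hadj => hadj.1

end Aux

section Contract

variable {V : Type*}

/-- `γ_sp(G/e) ≤ γ_sp(G)` witnessed constructively. -/
private lemma contract_of_sd {G : SimpleGraph V} {u v : V} (h : G.Adj u v)
    {S : Finset V} (hS : IsSuperDominatingSet G S) :
    ∃ T : Finset {x : V // x ≠ v},
      IsSuperDominatingSet (contractEdge G u v) T ∧ T.card ≤ S.card := by
  classical
  set St : Finset {x : V // x ≠ v} := (S.erase v).subtype (fun x => x ≠ v) with hSt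
  have hmemSt : ∀ z : {x : V // x ≠ v}, z ∈ St ↔ z.1 ∈ S := by
    intro z
    simp [hSt, Finset.mem_subtype, Finset.mem_erase, z.2]
  have hcardSt : St.card ≤ (S.erase v).card := by
    rw [hSt, Finset.card_subtype]
    exact Finset.card_filter_le _ _
  by_cases hvS : v ∈ S
  · by_cases huS : u ∈ S
    · -- both u, v ∈ S
      have huSt : (⟨u, h.ne⟩ : {x : V // x ≠ v}) ∈ St := (hmemSt _).2 huS
      by_cases hP : ∀ x, x ∉ S → x ≠ v →
          ∃ w, w ∈ S ∧ w ≠ u ∧ w ≠ v ∧ ∀ z, (G.Adj w z ∧ z ∉ S) ↔ z = x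
      · -- every outside vertex has a private dominator avoiding u, v
        refine ⟨St, isSD_of_priv ?_, le_trans hcardSt Finset.card_erase_le⟩
        intro x' hx'T
        have hxS : x'.1 ∉ S := fun hm => hx'T ((hmemSt x').2 hm)
        obtain ⟨w, hwS, hwu, hwv, hw⟩ := hP x'.1 hxS x'.2
        refine ⟨⟨w, hwv⟩, (hmemSt _).2 hwS, ?_⟩
        intro z'
        constructor
        · rintro ⟨hadj, hzT⟩
          rw [cadj_iff] at hadj
          obtain ⟨hne, hb⟩ := hadj
          have hzS : z'.1 ∉ S := fun hm => hzT ((hmemSt z').2 hm)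
          rcases hb with h1 | h2 | h3
          · exact Subtype.ext ((hw z'.1).1 ⟨h1, hzS⟩)
          · exact absurd h2.1 hwu
          · have hzu : z'.1 = u := h3.1
            exact absurd (hzu ▸ huS : z'.1 ∈ S) hzS
        · rintro rfl
          obtain ⟨hadj, _⟩ := (hw z'.1).2 rfl
          exact ⟨(cadj_iff G u v _ _).2 ⟨fun e => hadj.ne (congrArg Subtype.val e),
            Or.inl hadj⟩, hx'T⟩
      · -- some x₀ only has private dominators among {u, v}
        obtain ⟨x₀, hx₀⟩ := not_forall.1 hP
        rw [Classical.not_imp, Classical.not_imp] at hx₀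
        obtain ⟨hx₀S, hx₀v, hbad⟩ := hx₀
        obtain ⟨w₀, hw₀S, hw₀⟩ := hS.2 x₀ hx₀S
        have hw₀uv : w₀ = u ∨ w₀ = v := by
          by_contra hc
          push_neg at hc
          exact hbad ⟨w₀, hw₀S, hc.1, hc.2, hw₀⟩
        refine ⟨insert ⟨x₀, hx₀v⟩ St, isSD_of_priv ?_, ?_⟩
        swap
        · calc (insert (⟨x₀, hx₀v⟩ : {x : V // x ≠ v}) St).card ≤ St.card + 1 :=
                Finset.card_insert_le _ _
            _ ≤ (S.erase v).card + 1 := by omega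
            _ = S.card := Finset.card_erase_add_one hvS
        intro x' hx'T
        have hxx₀ : x'.1 ≠ x₀ := fun e => hx'T (by
          have hxe : x' = ⟨x₀, hx₀v⟩ := Subtype.ext e
          exact hxe ▸ Finset.mem_insert_self _ _)
        have hxS : x'.1 ∉ S := fun hm =>
          hx'T (Finset.mem_insert_of_mem ((hmemSt x').2 hm))
        obtain ⟨w, hwS, hw⟩ := hS.2 x'.1 hxS
        have hGwx : G.Adj w x'.1 ∧ x'.1 ∉ S := (hw x'.1).2 rfl
        by_cases hwuv : w = u ∨ w = v
        · -- use the merged vertex u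
          have hnew₀ : w ≠ w₀ := by
            intro e
            exact hxx₀ ((hw₀ x'.1).1 ⟨e ▸ hGwx.1, hxS⟩)
          refine ⟨⟨u, h.ne⟩, Finset.mem_insert_of_mem huSt, ?_⟩
          intro z'
          constructor
          · rintro ⟨hadj, hzT⟩
            rw [cadj_iff] at hadj
            obtain ⟨hne, hb⟩ := hadj
            have hzx₀ : z'.1 ≠ x₀ := fun e => hzT (by
              have hze : z' = ⟨x₀, hx₀v⟩ := Subtype.ext e
              exact hze ▸ Finset.mem_insert_self _ _)
            have hzS : z'.1 ∉ S := fun hm =>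
              hzT (Finset.mem_insert_of_mem ((hmemSt z').2 hm))
            have key : ∀ t, t = u ∨ t = v → G.Adj t z'.1 → z' = x' := by
              intro t ht hadjt
              rcases hwuv with hwu | hwv
              · rcases ht with h' | h'
                · have e : t = w := h'.trans hwu.symm
                  exact Subtype.ext ((hw z'.1).1 ⟨e ▸ hadjt, hzS⟩)
                · have hw₀v : w₀ = v := by
                    rcases hw₀uv with h'' | h''
                    · exact absurd (hwu.trans h''.symm) hnew₀
                    · exact h''
                  have e : t = w₀ := h'.trans hw₀v.symm
                  exact absurd ((hw₀ z'.1).1 ⟨e ▸ hadjt, hzS⟩) hzx₀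
              · rcases ht with h' | h'
                · have hw₀u : w₀ = u := by
                    rcases hw₀uv with h'' | h''
                    · exact h''
                    · exact absurd (hwv.trans h''.symm) hnew₀
                  have e : t = w₀ := h'.trans hw₀u.symm
                  exact absurd ((hw₀ z'.1).1 ⟨e ▸ hadjt, hzS⟩) hzx₀
                · have e : t = w := h'.trans hwv.symm
                  exact Subtype.ext ((hw z'.1).1 ⟨e ▸ hadjt, hzS⟩)
            rcases hb with h1 | h2 | h3
            · exact key u (Or.inl rfl) h1
            · exact key v (Or.inr rfl) h2.2
            · have hzu : z'.1 = u := h3.1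
              exact absurd (hzu ▸ huS : z'.1 ∈ S) hzS
          · rintro rfl
            refine ⟨(cadj_iff G u v _ _).2 ⟨?_, ?_⟩, hx'T⟩
            · intro e
              have he : u = z'.1 := congrArg Subtype.val e
              exact hxS (he ▸ huS)
            · rcases hwuv with hwu | hwv
              · exact Or.inl (hwu ▸ hGwx.1)
              · exact Or.inr (Or.inl ⟨rfl, hwv ▸ hGwx.1⟩)
        · push_neg at hwuv
          refine ⟨⟨w, hwuv.2⟩, Finset.mem_insert_of_mem ((hmemSt _).2 hwS),
            fun z' => ⟨?_, ?_⟩⟩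
          · rintro ⟨hadj, hzT⟩
            rw [cadj_iff] at hadj
            obtain ⟨hne, hb⟩ := hadj
            have hzS : z'.1 ∉ S := fun hm =>
              hzT (Finset.mem_insert_of_mem ((hmemSt z').2 hm))
            rcases hb with h1 | h2 | h3
            · exact Subtype.ext ((hw z'.1).1 ⟨h1, hzS⟩)
            · exact absurd h2.1 hwuv.1
            · have hzu : z'.1 = u := h3.1
              exact absurd (hzu ▸ huS : z'.1 ∈ S) hzS
          · rintro rfl
            exact ⟨(cadj_iff G u v _ _).2 ⟨fun e => hGwx.1.ne (congrArg Subtype.val e),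
              Or.inl hGwx.1⟩, hx'T⟩
    · -- v ∈ S, u ∉ S : use (S \ {v}) ∪ {u}
      refine ⟨insert ⟨u, h.ne⟩ St, isSD_of_priv ?_, ?_⟩
      swap
      · calc (insert (⟨u, h.ne⟩ : {x : V // x ≠ v}) St).card ≤ St.card + 1 :=
              Finset.card_insert_le _ _
          _ ≤ (S.erase v).card + 1 := by omega
          _ = S.card := Finset.card_erase_add_one hvS
      intro x' hx'T
      have hxu : x'.1 ≠ u := fun e => hx'T (by
        have hxe : x' = ⟨u, h.ne⟩ := Subtype.ext e
        exact hxe ▸ Finset.mem_insert_self _ _)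
      have hxS : x'.1 ∉ S := fun hm =>
        hx'T (Finset.mem_insert_of_mem ((hmemSt x').2 hm))
      obtain ⟨w, hwS, hw⟩ := hS.2 x'.1 hxS
      have hwv : w ≠ v := by
        intro e
        exact hxu ((hw u).1 ⟨e ▸ h.symm, huS⟩).symm
      refine ⟨⟨w, hwv⟩, Finset.mem_insert_of_mem ((hmemSt _).2 hwS), ?_⟩
      intro z'
      constructor
      · rintro ⟨hadj, hzT⟩
        rw [cadj_iff] at hadj
        obtain ⟨hne, hb⟩ := hadj
        have hzu : z'.1 ≠ u := fun e => hzT (by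
          have hze : z' = ⟨u, h.ne⟩ := Subtype.ext e
          exact hze ▸ Finset.mem_insert_self _ _)
        have hzS : z'.1 ∉ S := fun hm =>
          hzT (Finset.mem_insert_of_mem ((hmemSt z').2 hm))
        rcases hb with h1 | h2 | h3
        · exact Subtype.ext ((hw z'.1).1 ⟨h1, hzS⟩)
        · exact absurd (h2.1 ▸ hwS : (u : V) ∈ S) huS
        · exact absurd h3.1 hzu
      · rintro rfl
        obtain ⟨hadj, _⟩ := (hw z'.1).2 rfl
        exact ⟨(cadj_iff G u v _ _).2 ⟨fun e => hadj.ne (congrArg Subtype.val e),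
          Or.inl hadj⟩, hx'T⟩
  · -- v ∉ S : S itself (as a subtype finset) works
    set T : Finset {x : V // x ≠ v} := S.subtype (fun x => x ≠ v) with hT
    have hmemT : ∀ z : {x : V // x ≠ v}, z ∈ T ↔ z.1 ∈ S := by
      intro z
      simp [hT, Finset.mem_subtype]
    refine ⟨T, isSD_of_priv ?_, ?_⟩
    swap
    · rw [hT, Finset.card_subtype]
      exact Finset.card_filter_le _ _
    intro x' hx'T
    have hxS : x'.1 ∉ S := fun hm => hx'T ((hmemT x').2 hm)
    obtain ⟨w, hwS, hw⟩ := hS.2 x'.1 hxS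
    have hwv : w ≠ v := fun e => hvS (e ▸ hwS)
    have hkey : ¬ G.Adj v w := by
      intro hadj
      exact x'.2 ((hw v).1 ⟨hadj.symm, hvS⟩).symm
    have hkey2 : w = u → False := by
      intro e
      exact x'.2 ((hw v).1 ⟨e ▸ h, hvS⟩).symm
    refine ⟨⟨w, hwv⟩, (hmemT _).2 hwS, ?_⟩
    intro z'
    constructor
    · rintro ⟨hadj, hzT⟩
      rw [cadj_iff] at hadj
      obtain ⟨hne, hb⟩ := hadj
      have hzS : z'.1 ∉ S := fun hm => hzT ((hmemT z').2 hm)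
      rcases hb with h1 | h2 | h3
      · exact Subtype.ext ((hw z'.1).1 ⟨h1, hzS⟩)
      · exact absurd h2.1 hkey2
      · exact absurd h3.2 hkey
    · rintro rfl
      obtain ⟨hadj, _⟩ := (hw z'.1).2 rfl
      exact ⟨(cadj_iff G u v _ _).2 ⟨fun e => hadj.ne (congrArg Subtype.val e),
        Or.inl hadj⟩, hx'T⟩

/-- `γ_sp(G) ≤ γ_sp(G/e) + 1` witnessed constructively. -/
private lemma sd_of_contract {G : SimpleGraph V} {u v : V} (h : G.Adj u v)
    {T : Finset {x : V // x ≠ v}} (hT : IsSuperDominatingSet (contractEdge G u v) T) :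
    ∃ S : Finset V, IsSuperDominatingSet G S ∧ S.card ≤ T.card + 1 := by
  classical
  set u' : {x : V // x ≠ v} := ⟨u, h.ne⟩ with hu'
  set St : Finset V := T.image Subtype.val with hSt
  have hcard : St.card = T.card := Finset.card_image_of_injective _ Subtype.val_injective
  have hmem : ∀ z : {x : V // x ≠ v}, z.1 ∈ St ↔ z ∈ T := by
    intro z
    simp only [hSt, Finset.mem_image]
    constructor
    · rintro ⟨a, ha, hav⟩
      rwa [Subtype.val_injective hav] at ha
    · intro hz
      exact ⟨z, hz, rfl⟩
  by_cases hu'T : u' ∈ T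
  · -- merged vertex in T : S = St ∪ {v}
    refine ⟨insert v St, isSD_of_priv ?_, by
      calc (insert v St).card ≤ St.card + 1 := Finset.card_insert_le _ _
        _ = T.card + 1 := by rw [hcard]⟩
    intro x hx
    have hxv : x ≠ v := fun e => hx (e ▸ Finset.mem_insert_self v St)
    have hxSt : x ∉ St := fun e => hx (Finset.mem_insert_of_mem e)
    have hx'T : (⟨x, hxv⟩ : {x : V // x ≠ v}) ∉ T := fun e => hxSt ((hmem _).2 e)
    obtain ⟨w', hw'T, hw⟩ := hT.2 ⟨x, hxv⟩ hx'T
    have hadj0 := ((hw ⟨x, hxv⟩).2 rfl).1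
    rw [cadj_iff] at hadj0
    obtain ⟨hne0, hb0⟩ := hadj0
    by_cases hGwx : G.Adj w'.1 x
    · refine ⟨w'.1, Finset.mem_insert_of_mem ((hmem w').2 hw'T), ?_⟩
      intro z
      constructor
      · rintro ⟨hGz, hzS⟩
        have hzv : z ≠ v := fun e => hzS (e ▸ Finset.mem_insert_self v St)
        have hzSt : z ∉ St := fun e => hzS (Finset.mem_insert_of_mem e)
        have hz'T : (⟨z, hzv⟩ : {x : V // x ≠ v}) ∉ T := fun e => hzSt ((hmem _).2 e)
        have heq : (⟨z, hzv⟩ : {x : V // x ≠ v}) = ⟨x, hxv⟩ := (hw _).1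
          ⟨(cadj_iff G u v _ _).2 ⟨fun e => hGz.ne (congrArg Subtype.val e),
            Or.inl hGz⟩, hz'T⟩
        exact congrArg Subtype.val heq
      · rintro rfl
        exact ⟨hGwx, hx⟩
    · rcases hb0 with h1 | h2 | h3
      · exact absurd h1 hGwx
      · -- w' = u' and G.Adj v x : use v
        have hw'u : w' = u' := Subtype.ext h2.1
        have huSt : u ∈ St := (hmem u').2 (hw'u ▸ hw'T)
        refine ⟨v, Finset.mem_insert_self v St, ?_⟩
        intro z
        constructor
        · rintro ⟨hGvz, hzS⟩
          have hzv : z ≠ v := hGvz.ne'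
          have hzSt : z ∉ St := fun e => hzS (Finset.mem_insert_of_mem e)
          have hzu : z ≠ u := fun e => hzSt (e ▸ huSt)
          have hz'T : (⟨z, hzv⟩ : {x : V // x ≠ v}) ∉ T := fun e => hzSt ((hmem _).2 e)
          have hwz : w' ≠ (⟨z, hzv⟩ : {x : V // x ≠ v}) := by
            intro e
            exact hzu ((congrArg Subtype.val e).symm.trans h2.1)
          have heq : (⟨z, hzv⟩ : {x : V // x ≠ v}) = ⟨x, hxv⟩ := (hw _).1
            ⟨(cadj_iff G u v _ _).2 ⟨hwz, Or.inr (Or.inl ⟨h2.1, hGvz⟩)⟩, hz'T⟩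
          exact congrArg Subtype.val heq
        · rintro rfl
          exact ⟨h2.2, hx⟩
      · -- x = u : impossible since u ∈ St
        have huSt : u ∈ St := (hmem u').2 hu'T
        have hxu : x = u := h3.1
        exact absurd (hxu ▸ huSt : x ∈ St) hxSt
  · -- merged vertex not in T
    obtain ⟨w₀', hw₀T, hw₀⟩ := hT.2 u' hu'T
    have hadj₀ := ((hw₀ u').2 rfl).1
    rw [cadj_iff] at hadj₀
    obtain ⟨hne₀, hb₀⟩ := hadj₀
    have hw₀u : w₀'.1 ≠ (u : V) := fun e => hne₀ (Subtype.ext e)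
    have hb₀' : G.Adj w₀'.1 u ∨ G.Adj v w₀'.1 := by
      rcases hb₀ with h1 | h2 | h3
      · exact Or.inl h1
      · exact absurd h2.1 hw₀u
      · exact Or.inr h3.2
    have huStn : u ∉ St := fun e => hu'T ((hmem u').1 e)
    by_cases hA : G.Adj w₀'.1 u
    · -- case A : S = St ∪ {v}
      refine ⟨insert v St, isSD_of_priv ?_, by
        calc (insert v St).card ≤ St.card + 1 := Finset.card_insert_le _ _
          _ = T.card + 1 := by rw [hcard]⟩
      intro x hx
      have hxv : x ≠ v := fun e => hx (e ▸ Finset.mem_insert_self v St)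
      have hxSt : x ∉ St := fun e => hx (Finset.mem_insert_of_mem e)
      have hx'T : (⟨x, hxv⟩ : {x : V // x ≠ v}) ∉ T := fun e => hxSt ((hmem _).2 e)
      by_cases hxu : x = u
      · -- x = u : use w₀
        refine ⟨w₀'.1, Finset.mem_insert_of_mem ((hmem w₀').2 hw₀T), ?_⟩
        intro z
        constructor
        · rintro ⟨hGz, hzS⟩
          have hzv : z ≠ v := fun e => hzS (e ▸ Finset.mem_insert_self v St)
          have hzSt : z ∉ St := fun e => hzS (Finset.mem_insert_of_mem e)
          have hz'T : (⟨z, hzv⟩ : {x : V // x ≠ v}) ∉ T := fun e => hzSt ((hmem _).2 e)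
          have heq : (⟨z, hzv⟩ : {x : V // x ≠ v}) = u' := (hw₀ _).1
            ⟨(cadj_iff G u v _ _).2 ⟨fun e => hGz.ne (congrArg Subtype.val e),
              Or.inl hGz⟩, hz'T⟩
          have : z = u := congrArg Subtype.val heq
          exact this.trans hxu.symm
        · rintro rfl
          exact ⟨by rw [hxu]; exact hA, hx⟩
      · obtain ⟨w', hw'T, hw⟩ := hT.2 ⟨x, hxv⟩ hx'T
        have hadj0 := ((hw ⟨x, hxv⟩).2 rfl).1
        rw [cadj_iff] at hadj0
        obtain ⟨hne0, hb0⟩ := hadj0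
        have hGwx : G.Adj w'.1 x := by
          rcases hb0 with h1 | h2 | h3
          · exact h1
          · have hw'u : w' = u' := Subtype.ext h2.1
            exact absurd (hw'u ▸ hw'T : u' ∈ T) hu'T
          · exact absurd h3.1 hxu
        refine ⟨w'.1, Finset.mem_insert_of_mem ((hmem w').2 hw'T), ?_⟩
        intro z
        constructor
        · rintro ⟨hGz, hzS⟩
          have hzv : z ≠ v := fun e => hzS (e ▸ Finset.mem_insert_self v St)
          have hzSt : z ∉ St := fun e => hzS (Finset.mem_insert_of_mem e)
          have hz'T : (⟨z, hzv⟩ : {x : V // x ≠ v}) ∉ T := fun e => hzSt ((hmem _).2 e)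
          have heq : (⟨z, hzv⟩ : {x : V // x ≠ v}) = ⟨x, hxv⟩ := (hw _).1
            ⟨(cadj_iff G u v _ _).2 ⟨fun e => hGz.ne (congrArg Subtype.val e),
              Or.inl hGz⟩, hz'T⟩
          exact congrArg Subtype.val heq
        · rintro rfl
          exact ⟨hGwx, hx⟩
    · -- case B : G.Adj v w₀ ; S = St ∪ {u}
      have hB : G.Adj v w₀'.1 := hb₀'.resolve_left hA
      refine ⟨insert u St, isSD_of_priv ?_, by
        calc (insert u St).card ≤ St.card + 1 := Finset.card_insert_le _ _
          _ = T.card + 1 := by rw [hcard]⟩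
      intro x hx
      have hxu : x ≠ u := fun e => hx (e ▸ Finset.mem_insert_self u St)
      have hxSt : x ∉ St := fun e => hx (Finset.mem_insert_of_mem e)
      by_cases hxv : x = v
      · -- x = v : use w₀
        refine ⟨w₀'.1, Finset.mem_insert_of_mem ((hmem w₀').2 hw₀T), ?_⟩
        intro z
        constructor
        · rintro ⟨hGz, hzS⟩
          have hzu : z ≠ u := fun e => hzS (e ▸ Finset.mem_insert_self u St)
          have hzSt : z ∉ St := fun e => hzS (Finset.mem_insert_of_mem e)
          by_cases hzv : z = v
          · exact hzv.trans hxv.symm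
          · have hz'T : (⟨z, hzv⟩ : {x : V // x ≠ v}) ∉ T := fun e => hzSt ((hmem _).2 e)
            have heq : (⟨z, hzv⟩ : {x : V // x ≠ v}) = u' := (hw₀ _).1
              ⟨(cadj_iff G u v _ _).2 ⟨fun e => hGz.ne (congrArg Subtype.val e),
                Or.inl hGz⟩, hz'T⟩
            exact absurd (congrArg Subtype.val heq) hzu
        · rintro rfl
          exact ⟨by rw [hxv]; exact hB.symm, hx⟩
      · have hx'T : (⟨x, hxv⟩ : {x : V // x ≠ v}) ∉ T := fun e => hxSt ((hmem _).2 e)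
        obtain ⟨w', hw'T, hw⟩ := hT.2 ⟨x, hxv⟩ hx'T
        have hadj0 := ((hw ⟨x, hxv⟩).2 rfl).1
        rw [cadj_iff] at hadj0
        obtain ⟨hne0, hb0⟩ := hadj0
        have hGwx : G.Adj w'.1 x := by
          rcases hb0 with h1 | h2 | h3
          · exact h1
          · have hw'u : w' = u' := Subtype.ext h2.1
            exact absurd (hw'u ▸ hw'T : u' ∈ T) hu'T
          · exact absurd h3.1 hxu
        refine ⟨w'.1, Finset.mem_insert_of_mem ((hmem w').2 hw'T), ?_⟩
        intro z
        constructor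
        · rintro ⟨hGz, hzS⟩
          have hzu : z ≠ u := fun e => hzS (e ▸ Finset.mem_insert_self u St)
          have hzSt : z ∉ St := fun e => hzS (Finset.mem_insert_of_mem e)
          by_cases hzv : z = v
          · -- z = v : contradiction via u' being privately dominated
            exfalso
            have hGvw : G.Adj v w'.1 := hzv ▸ hGz.symm
            have hne' : w' ≠ u' := fun e => hu'T (e ▸ hw'T)
            have heq : u' = (⟨x, hxv⟩ : {x : V // x ≠ v}) := (hw u').1
              ⟨(cadj_iff G u v _ _).2 ⟨hne', Or.inr (Or.inr ⟨rfl, hGvw⟩)⟩, hu'T⟩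
            exact hxu (congrArg Subtype.val heq).symm
          · have hz'T : (⟨z, hzv⟩ : {x : V // x ≠ v}) ∉ T := fun e => hzSt ((hmem _).2 e)
            have heq : (⟨z, hzv⟩ : {x : V // x ≠ v}) = ⟨x, hxv⟩ := (hw _).1
              ⟨(cadj_iff G u v _ _).2 ⟨fun e => hGz.ne (congrArg Subtype.val e),
                Or.inl hGz⟩, hz'T⟩
            exact congrArg Subtype.val heq
        · rintro rfl
          exact ⟨hGwx, hx⟩

end Contract

/-- For any graph `G` and edge `e = uv`,
`(γ_sp(G-e) + γ_sp(G/e) - 1)/2 ≤ γ_sp(G) ≤ (γ_sp(G-e) + γ_sp(G/e))/2 + 1`. -/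
theorem stmt12 {V : Type*} [Fintype V] (G : SimpleGraph V) (u v : V) (h : G.Adj u v) :
    ((superDominationNumber (G.deleteEdges {s(u, v)}) : ℝ) +
        (superDominationNumber (contractEdge G u v) : ℝ) - 1) / 2 ≤
      (superDominationNumber G : ℝ) ∧
    (superDominationNumber G : ℝ) ≤
      ((superDominationNumber (G.deleteEdges {s(u, v)}) : ℝ) +
        (superDominationNumber (contractEdge G u v) : ℝ)) / 2 + 1 := by
  classical
  obtain ⟨Sg, hSg, hcg⟩ := sdn_spec G
  obtain ⟨Sa, hSa, hca⟩ := sdn_spec (G.deleteEdges {s(u, v)})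
  obtain ⟨Tb, hTb, hcb⟩ := sdn_spec (contractEdge G u v)
  have h1 : superDominationNumber (G.deleteEdges {s(u, v)}) ≤ superDominationNumber G + 1 := by
    obtain ⟨S', hS', hc'⟩ := transfer (hagree_del G u v) hSg
    calc superDominationNumber (G.deleteEdges {s(u, v)}) ≤ S'.card := sdn_le hS'
      _ ≤ Sg.card + 1 := hc'
      _ = superDominationNumber G + 1 := by rw [hcg]
  have h2 : superDominationNumber G ≤ superDominationNumber (G.deleteEdges {s(u, v)}) + 1 := by
    obtain ⟨S', hS', hc'⟩ := transfer
      (fun a b p q => (hagree_del G u v a b p q).symm) hSa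
    calc superDominationNumber G ≤ S'.card := sdn_le hS'
      _ ≤ Sa.card + 1 := hc'
      _ = superDominationNumber (G.deleteEdges {s(u, v)}) + 1 := by rw [hca]
  have h3 : superDominationNumber (contractEdge G u v) ≤ superDominationNumber G := by
    obtain ⟨T, hT, hc'⟩ := contract_of_sd h hSg
    calc superDominationNumber (contractEdge G u v) ≤ T.card := sdn_le hT
      _ ≤ Sg.card := hc'
      _ = superDominationNumber G := hcg
  have h4 : superDominationNumber G ≤ superDominationNumber (contractEdge G u v) + 1 := by
    obtain ⟨S', hS', hc'⟩ := sd_of_contract h hTb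
    calc superDominationNumber G ≤ S'.card := sdn_le hS'
      _ ≤ Tb.card + 1 := hc'
      _ = superDominationNumber (contractEdge G u v) + 1 := by rw [hcb]
  have r1 : (superDominationNumber (G.deleteEdges {s(u, v)}) : ℝ) ≤
      (superDominationNumber G : ℝ) + 1 := by exact_mod_cast h1
  have r2 : (superDominationNumber G : ℝ) ≤
      (superDominationNumber (G.deleteEdges {s(u, v)}) : ℝ) + 1 := by exact_mod_cast h2
  have r3 : (superDominationNumber (contractEdge G u v) : ℝ) ≤
      (superDominationNumber G : ℝ) := by exact_mod_cast h3
  have r4 : (superDominationNumber G : ℝ) ≤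
      (superDominationNumber (contractEdge G u v) : ℝ) + 1 := by exact_mod_cast h4
  constructor <;> linarith
end

section
/- If v is a vertex of degree at least 2 in a graph G, then (γ_sp(G−v) + γ_sp(G/v) − ⌊deg(v)/2⌋ + 1)/2 ≤ γ_sp(G) ≤ (γ_sp(G−v) + γ_sp(G/v))/2 + 1. -/
open SimpleGraph

/-!
Adding `v` to a super dominating set of `G - v` or of `G/v` gives one of `G`, so
`γ_sp(G) ≤ γ_sp(G - v) + 1` and `γ_sp(G) ≤ γ_sp(G/v) + 1`.

Conversely, let `S` be a minimum super dominating set of `G` and `w u` a super dominator of each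
`u ∉ S`; `w` is injective off `S`. If `v = w u₀`, swapping `v` for `u₀` gives a super dominating set
of both `G - v` and `G/v`. Otherwise `S - v` serves for `G - v`, and for `G/v` one must also cut the
new edges between `P = N(v) - S` and `B = {u ∉ S | w u ∈ N(v)}`; as `P` and `w '' B` are disjoint
parts of `N(v)`, adding the smaller of `P` and `B` costs at most `⌊deg v / 2⌋`. Combining the four
inequalities gives both bounds.
-/

open Finset

section

variable {V : Type*} {G : SimpleGraph V} {S : Finset V}

namespace IsSuperDominatingSet

theorem of_forall_exists (h : ∀ u ∉ S, ∃ v ∈ S, ∀ w, (G.Adj v w ∧ w ∉ S) ↔ w = u) :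
    IsSuperDominatingSet G S :=
  ⟨fun u hu => (h u hu).imp fun _ ⟨hvS, hv⟩ => ⟨hvS, ((hv u).2 rfl).1⟩, h⟩

theorem univ [Fintype V] (G : SimpleGraph V) : IsSuperDominatingSet G Finset.univ :=
  of_forall_exists fun u hu => absurd (mem_univ u) hu

end IsSuperDominatingSet

theorem superDominationNumber_le_card (h : IsSuperDominatingSet G S) :
    superDominationNumber G ≤ S.card :=
  Nat.sInf_le ⟨S, h, rfl⟩

theorem exists_isSuperDominatingSet_card_eq [Finite V] (G : SimpleGraph V) :
    ∃ S : Finset V, IsSuperDominatingSet G S ∧ S.card = superDominationNumber G := by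
  have := Fintype.ofFinite V
  exact Nat.sInf_mem (s := {n | ∃ S : Finset V, IsSuperDominatingSet G S ∧ S.card = n})
    ⟨_, Finset.univ, .univ G, rfl⟩

def IsSuperDominatorFun (G : SimpleGraph V) (S : Finset V) (w : V → V) : Prop :=
  ∀ u ∉ S, w u ∈ S ∧ ∀ x, (G.Adj (w u) x ∧ x ∉ S) ↔ x = u

theorem IsSuperDominatingSet.exists_isSuperDominatorFun (h : IsSuperDominatingSet G S) :
    ∃ w, IsSuperDominatorFun G S w := by
  classical
  exact ⟨fun u => if hu : u ∈ S then u else (h.2 u hu).choose, fun u hu => by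
    simpa only [dif_neg hu] using (h.2 u hu).choose_spec⟩

namespace IsSuperDominatorFun

variable {w : V → V} {u x : V}

theorem mem (hw : IsSuperDominatorFun G S w) (hu : u ∉ S) : w u ∈ S :=
  (hw u hu).1

theorem adj (hw : IsSuperDominatorFun G S w) (hu : u ∉ S) : G.Adj (w u) u :=
  (((hw u hu).2 u).2 rfl).1

theorem eq_of_adj (hw : IsSuperDominatorFun G S w) (hu : u ∉ S) (hadj : G.Adj (w u) x)
    (hx : x ∉ S) : x = u :=
  ((hw u hu).2 x).1 ⟨hadj, hx⟩

theorem injOn (hw : IsSuperDominatorFun G S w) : Set.InjOn w (↑S)ᶜ := fun _ ha _ hb hab =>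
  (hw.eq_of_adj ha (hab ▸ hw.adj hb) hb).symm

end IsSuperDominatorFun

end

section VertexOperations

variable {V : Type*} {G : SimpleGraph V} {v : V}

@[simp]
theorem deleteVertex_adj {a b : {x // x ≠ v}} : (deleteVertex G v).Adj a b ↔ G.Adj a b :=
  Iff.rfl

theorem contractVertex_adj {a b : {x // x ≠ v}} :
    (contractVertex G v).Adj a b ↔ (a : V) ≠ b ∧ (G.Adj a b ∨ G.Adj v a ∧ G.Adj v b) := by
  simp only [contractVertex, fromRel_adj, ne_eq, Subtype.ext_iff]
  constructor
  · rintro ⟨hne, h | h⟩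
    · exact ⟨hne, h⟩
    · exact ⟨hne, h.imp (fun h => h.symm) And.symm⟩
  · rintro ⟨hne, h⟩
    exact ⟨hne, .inl h⟩

variable [DecidableEq V]

theorem notMem_insert_map_subtype {T : Finset {x // x ≠ v}} {x : V} :
    x ∉ insert v (T.map (Function.Embedding.subtype _)) ↔ ∃ hx : x ≠ v, ⟨x, hx⟩ ∉ T := by
  simp only [mem_insert, mem_map, Function.Embedding.coe_subtype, not_or, not_exists, not_and]
  exact ⟨fun ⟨hx, h⟩ => ⟨hx, fun hT => h _ hT rfl⟩,
    fun ⟨hx, h⟩ => ⟨hx, fun _ hy hyx => h (hyx ▸ hy)⟩⟩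

theorem IsSuperDominatingSet.insert_map_of_deleteVertex {T : Finset {x // x ≠ v}}
    (hT : IsSuperDominatingSet (deleteVertex G v) T) :
    IsSuperDominatingSet G (insert v (T.map (Function.Embedding.subtype _))) := by
  refine .of_forall_exists fun u hu => ?_
  obtain ⟨huv, huT⟩ := notMem_insert_map_subtype.1 hu
  obtain ⟨w, hwT, hw⟩ := hT.2 _ huT
  refine ⟨w, mem_insert_of_mem (mem_map_of_mem _ hwT), fun x => ?_⟩
  rw [notMem_insert_map_subtype]
  constructor
  · rintro ⟨hadj, hxv, hxT⟩
    exact congrArg Subtype.val ((hw ⟨x, hxv⟩).1 ⟨hadj, hxT⟩)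
  · rintro rfl
    exact ⟨((hw _).2 rfl).1, huv, huT⟩

theorem IsSuperDominatingSet.insert_map_of_contractVertex {T : Finset {x // x ≠ v}}
    (hT : IsSuperDominatingSet (contractVertex G v) T) :
    IsSuperDominatingSet G (insert v (T.map (Function.Embedding.subtype _))) := by
  set S := insert v (T.map (Function.Embedding.subtype _))
  refine .of_forall_exists fun u hu => ?_
  obtain ⟨huv, huT⟩ := notMem_insert_map_subtype.1 hu
  obtain ⟨w, hwT, hw⟩ := hT.2 _ huT
  have hwS : (w : V) ∈ S := mem_insert_of_mem (mem_map_of_mem _ hwT)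
  by_cases hGwu : G.Adj w u
  · refine ⟨w, hwS, fun x => ⟨fun ⟨hadj, hx⟩ => ?_, by rintro rfl; exact ⟨hGwu, hu⟩⟩⟩
    obtain ⟨hxv, hxT⟩ := notMem_insert_map_subtype.1 hx
    exact congrArg Subtype.val
      ((hw ⟨x, hxv⟩).1 ⟨contractVertex_adj.2 ⟨hadj.ne, .inl hadj⟩, hxT⟩)
  · -- the edge `wu` of `G/v` comes from `v`, and then `v` is a super dominator of `u` in `G`
    obtain ⟨hvw, hvu⟩ := (contractVertex_adj.1 ((hw _).2 rfl).1).2.resolve_left hGwu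
    refine ⟨v, mem_insert_self _ _,
      fun x => ⟨fun ⟨hadj, hx⟩ => ?_, by rintro rfl; exact ⟨hvu, hu⟩⟩⟩
    obtain ⟨hxv, hxT⟩ := notMem_insert_map_subtype.1 hx
    have hwx : (w : V) ≠ x := by rintro rfl; exact hx hwS
    exact congrArg Subtype.val
      ((hw ⟨x, hxv⟩).1 ⟨contractVertex_adj.2 ⟨hwx, .inr ⟨hvw, hadj⟩⟩, hxT⟩)

theorem superDominationNumber_le_add_one_of_lift [Finite V] {H : SimpleGraph {x // x ≠ v}}
    (hlift : ∀ T, IsSuperDominatingSet H T →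
      IsSuperDominatingSet G (insert v (T.map (Function.Embedding.subtype _)))) :
    superDominationNumber G ≤ superDominationNumber H + 1 := by
  obtain ⟨T, hT, hcard⟩ := exists_isSuperDominatingSet_card_eq H
  calc superDominationNumber G ≤ (insert v (T.map (Function.Embedding.subtype _))).card :=
        superDominationNumber_le_card (hlift T hT)
    _ ≤ superDominationNumber H + 1 :=
        (card_insert_le _ _).trans_eq (by rw [card_map, hcard])

theorem superDominationNumber_le_card_of_subtype {H : SimpleGraph {x // x ≠ v}} {S : Finset V}
    (hv : v ∉ S) (h : IsSuperDominatingSet H (S.subtype (· ≠ v))) :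
    superDominationNumber H ≤ S.card := by
  refine (superDominationNumber_le_card h).trans_eq ?_
  rw [card_subtype, filter_true_of_mem fun x hx => ne_of_mem_of_not_mem hx hv]

end VertexOperations

theorem notMem_of_erase_subset {V : Type*} [DecidableEq V] {S S' : Finset V} {v x : V}
    (hS : S.erase v ⊆ S') (hxv : x ≠ v) (hx : x ∉ S') : x ∉ S :=
  fun h => hx (hS (mem_erase.2 ⟨hxv, h⟩))

namespace IsSuperDominatorFun

variable {V : Type*} [DecidableEq V] {G : SimpleGraph V} {S S' : Finset V} {w : V → V} {v : V}

theorem isSuperDominatingSet_deleteVertex (hw : IsSuperDominatorFun G S w)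
    (hS : S.erase v ⊆ S') (hwv : ∀ u ∉ S, u ∉ S' → w u ≠ v) :
    IsSuperDominatingSet (deleteVertex G v) (S'.subtype (· ≠ v)) := by
  refine .of_forall_exists fun ⟨u, huv⟩ hu => ?_
  rw [mem_subtype] at hu
  have huS := notMem_of_erase_subset hS huv hu
  have hwuv := hwv u huS hu
  refine ⟨⟨w u, hwuv⟩, mem_subtype.2 (hS (mem_erase.2 ⟨hwuv, hw.mem huS⟩)),
    fun ⟨x, hxv⟩ => ?_⟩
  rw [mem_subtype, Subtype.mk.injEq, deleteVertex_adj]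
  exact ⟨fun ⟨hadj, hx⟩ => hw.eq_of_adj huS hadj (notMem_of_erase_subset hS hxv hx),
    by rintro rfl; exact ⟨hw.adj huS, hu⟩⟩

theorem isSuperDominatingSet_contractVertex (hw : IsSuperDominatorFun G S w)
    (hS : S.erase v ⊆ S') (hwv : ∀ u ∉ S, u ∉ S' → w u ≠ v)
    (hsep : ∀ u ∉ S, u ∉ S' → u ≠ v → G.Adj v (w u) → ∀ x ∉ S', ¬ G.Adj v x) :
    IsSuperDominatingSet (contractVertex G v) (S'.subtype (· ≠ v)) := by
  refine .of_forall_exists fun ⟨u, huv⟩ hu => ?_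
  rw [mem_subtype] at hu
  have huS := notMem_of_erase_subset hS huv hu
  have hwuv := hwv u huS hu
  refine ⟨⟨w u, hwuv⟩, mem_subtype.2 (hS (mem_erase.2 ⟨hwuv, hw.mem huS⟩)),
    fun ⟨x, hxv⟩ => ?_⟩
  rw [mem_subtype, Subtype.mk.injEq, contractVertex_adj]
  constructor
  · rintro ⟨⟨-, hadj | ⟨hvw, hvx⟩⟩, hx⟩
    · exact hw.eq_of_adj huS hadj (notMem_of_erase_subset hS hxv hx)
    · exact absurd hvx (hsep u huS hu huv hvw x hx)
  · rintro rfl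
    exact ⟨⟨(hw.adj huS).ne, .inl (hw.adj huS)⟩, hu⟩

variable {u₀ : V}

theorem notMem_insert_erase (hw : IsSuperDominatorFun G S w) (hu₀ : u₀ ∉ S) :
    w u₀ ∉ insert u₀ (S.erase (w u₀)) := by
  simp only [mem_insert, mem_erase, ne_eq, not_true_eq_false, false_and, or_false]
  exact fun h => hu₀ (h ▸ hw.mem hu₀)

theorem card_insert_erase_le (hw : IsSuperDominatorFun G S w) (hu₀ : u₀ ∉ S) :
    (insert u₀ (S.erase (w u₀))).card ≤ S.card :=
  (card_insert_le _ _).trans_eq (card_erase_add_one (hw.mem hu₀))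

theorem apply_ne_of_notMem_insert_erase (hw : IsSuperDominatorFun G S w) (hu₀ : u₀ ∉ S) :
    ∀ u ∉ S, u ∉ insert u₀ (S.erase (w u₀)) → w u ≠ w u₀ :=
  fun _ hu hu' h => hu' (mem_insert.2 (.inl (hw.injOn hu hu₀ h)))

theorem not_adj_of_notMem_insert_erase (hw : IsSuperDominatorFun G S w) (hu₀ : u₀ ∉ S) :
    ∀ x ∉ insert u₀ (S.erase (w u₀)), ¬ G.Adj (w u₀) x := fun _ hx hadj =>
  hx (mem_insert.2 (.inl (hw.eq_of_adj hu₀ hadj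
    (notMem_of_erase_subset (subset_insert _ _) hadj.ne' hx))))

theorem card_filter_add_card_filter_le_degree [Fintype V] [DecidableRel G.Adj]
    (hw : IsSuperDominatorFun G S w) (v : V) :
    ((G.neighborFinset v).filter (· ∉ S)).card + (Sᶜ.filter fun u => G.Adj v (w u)).card ≤
      G.degree v := by
  have hinj : Set.InjOn w ↑(Sᶜ.filter fun u => G.Adj v (w u)) :=
    hw.injOn.mono fun u hu => by simpa using (mem_filter.1 hu).1
  rw [← card_image_of_injOn hinj, ← card_neighborFinset_eq_degree,
    ← card_filter_add_card_filter_not (s := G.neighborFinset v) (· ∉ S)]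
  gcongr
  rintro _ hx
  obtain ⟨u, hu, rfl⟩ := mem_image.1 hx
  obtain ⟨hu, hvw⟩ := mem_filter.1 hu
  simpa [hvw] using hw.mem (mem_compl.1 hu)

end IsSuperDominatorFun

section Bounds

variable {V : Type*}

theorem IsSuperDominatorFun.superDominationNumber_contractVertex_add_one_le [Fintype V]
    [DecidableEq V] {G : SimpleGraph V} [DecidableRel G.Adj] {S : Finset V} {w : V → V} {v : V}
    (hw : IsSuperDominatorFun G S w) (hvS : v ∈ S) (hwv : ∀ u ∉ S, w u ≠ v) :
    superDominationNumber (contractVertex G v) + 1 ≤ S.card + G.degree v / 2 := by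
  set P := (G.neighborFinset v).filter (· ∉ S)
  set B := Sᶜ.filter fun u => G.Adj v (w u)
  have hPB : P.card + B.card ≤ G.degree v := hw.card_filter_add_card_filter_le_degree v
  obtain ⟨D, hvD, hD, hDcard⟩ :
      ∃ D : Finset V, v ∉ D ∧ (P ⊆ D ∨ B ⊆ D) ∧ D.card ≤ G.degree v / 2 := by
    rcases le_total P.card B.card with h | h
    · exact ⟨P, by simp [P], .inl subset_rfl, by omega⟩
    · exact ⟨B, by simp [B, hvS], .inr subset_rfl, by omega⟩
  have hS : S.erase v ⊆ S.erase v ∪ D := subset_union_left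
  have hsep : ∀ u ∉ S, u ∉ S.erase v ∪ D → u ≠ v → G.Adj v (w u) →
      ∀ x ∉ S.erase v ∪ D, ¬ G.Adj v x := by
    intro u hu hu' _ hvw x hx hvx
    have hxP : x ∈ P := mem_filter.2 ⟨(mem_neighborFinset _ _ _).2 hvx,
      notMem_of_erase_subset hS hvx.ne' hx⟩
    have huB : u ∈ B := mem_filter.2 ⟨mem_compl.2 hu, hvw⟩
    rcases hD with hP | hB
    · exact hx (mem_union_right _ (hP hxP))
    · exact hu' (mem_union_right _ (hB huB))
  have hsds := hw.isSuperDominatingSet_contractVertex hS (fun u hu _ => hwv u hu) hsep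
  calc superDominationNumber (contractVertex G v) + 1 ≤ (S.erase v ∪ D).card + 1 :=
        Nat.add_le_add_right (superDominationNumber_le_card_of_subtype (by simp [hvD]) hsds) 1
    _ ≤ (S.erase v).card + 1 + D.card := by have := card_union_le (S.erase v) D; omega
    _ ≤ S.card + G.degree v / 2 := by rw [card_erase_add_one hvS]; omega

variable [Fintype V] (G : SimpleGraph V) (v : V)

theorem superDominationNumber_le_deleteVertex_add_one :
    superDominationNumber G ≤ superDominationNumber (deleteVertex G v) + 1 := by
  classical
  exact superDominationNumber_le_add_one_of_lift fun _ hT => hT.insert_map_of_deleteVertex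

theorem superDominationNumber_le_contractVertex_add_one :
    superDominationNumber G ≤ superDominationNumber (contractVertex G v) + 1 := by
  classical
  exact superDominationNumber_le_add_one_of_lift fun _ hT => hT.insert_map_of_contractVertex

theorem superDominationNumber_deleteVertex_le :
    superDominationNumber (deleteVertex G v) ≤ superDominationNumber G := by
  classical
  obtain ⟨S, hS, hcard⟩ := exists_isSuperDominatingSet_card_eq G
  obtain ⟨w, hw⟩ := hS.exists_isSuperDominatorFun
  rw [← hcard]
  by_cases h : ∃ u₀ ∉ S, w u₀ = v
  · obtain ⟨u₀, hu₀, rfl⟩ := h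
    exact (superDominationNumber_le_card_of_subtype (hw.notMem_insert_erase hu₀)
      (hw.isSuperDominatingSet_deleteVertex (subset_insert _ _)
        (hw.apply_ne_of_notMem_insert_erase hu₀))).trans (hw.card_insert_erase_le hu₀)
  · push Not at h
    exact (superDominationNumber_le_card_of_subtype (notMem_erase _ _)
      (hw.isSuperDominatingSet_deleteVertex subset_rfl fun u hu _ => h u hu)).trans
      card_erase_le

theorem superDominationNumber_contractVertex_add_one_le (hv : 2 ≤ (G.neighborSet v).ncard) :
    superDominationNumber (contractVertex G v) + 1 ≤
      superDominationNumber G + (G.neighborSet v).ncard / 2 := by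
  classical
  obtain ⟨S, hS, hcard⟩ := exists_isSuperDominatingSet_card_eq G
  obtain ⟨w, hw⟩ := hS.exists_isSuperDominatorFun
  have hdeg : (G.neighborSet v).ncard = G.degree v := by
    rw [← card_neighborFinset_eq_degree, Set.ncard_eq_toFinset_card']
    rfl
  rw [← hcard, hdeg]
  rw [hdeg] at hv
  by_cases h : ∃ u₀ ∉ S, w u₀ = v
  · obtain ⟨u₀, hu₀, rfl⟩ := h
    have := (superDominationNumber_le_card_of_subtype (hw.notMem_insert_erase hu₀)
      (hw.isSuperDominatingSet_contractVertex (subset_insert _ _)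
        (hw.apply_ne_of_notMem_insert_erase hu₀)
        fun _ _ _ _ _ => hw.not_adj_of_notMem_insert_erase hu₀)).trans
      (hw.card_insert_erase_le hu₀)
    omega
  push Not at h
  by_cases hvS : v ∈ S
  · exact hw.superDominationNumber_contractVertex_add_one_le hvS h
  · have := superDominationNumber_le_card_of_subtype hvS
      (hw.isSuperDominatingSet_contractVertex (erase_subset v S)
        (fun u hu _ => ne_of_mem_of_not_mem (hw.mem hu) hvS)
        fun u hu _ huv hvw => absurd (hw.eq_of_adj hu hvw.symm hvS) huv.symm)
    omega

end Bounds

/-- If `v` has degree at least `2` in `G`, then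
`(γ_sp(G-v) + γ_sp(G/v) - ⌊deg(v)/2⌋ + 1)/2 ≤ γ_sp(G) ≤ (γ_sp(G-v) + γ_sp(G/v))/2 + 1`. -/
theorem stmt18 {V : Type*} [Fintype V] (G : SimpleGraph V) (v : V)
    (hv : 2 ≤ (G.neighborSet v).ncard) :
    ((superDominationNumber (deleteVertex G v) : ℝ) +
        (superDominationNumber (contractVertex G v) : ℝ) -
        ((G.neighborSet v).ncard / 2 : ℕ) + 1) / 2 ≤
      (superDominationNumber G : ℝ) ∧
    (superDominationNumber G : ℝ) ≤
      ((superDominationNumber (deleteVertex G v) : ℝ) +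
        (superDominationNumber (contractVertex G v) : ℝ)) / 2 + 1 := by
  have hdel_le : (superDominationNumber (deleteVertex G v) : ℝ) ≤ superDominationNumber G := by
    exact_mod_cast superDominationNumber_deleteVertex_le G v
  have hcon_le : (superDominationNumber (contractVertex G v) : ℝ) + 1 ≤
      superDominationNumber G + ((G.neighborSet v).ncard / 2 : ℕ) := by
    exact_mod_cast superDominationNumber_contractVertex_add_one_le G v hv
  have hle_del : (superDominationNumber G : ℝ) ≤
      superDominationNumber (deleteVertex G v) + 1 := by
    exact_mod_cast superDominationNumber_le_deleteVertex_add_one G v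
  have hle_con : (superDominationNumber G : ℝ) ≤
      superDominationNumber (contractVertex G v) + 1 := by
    exact_mod_cast superDominationNumber_le_contractVertex_add_one G v
  constructor <;> linarith
end
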